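/- arXiv:math/0608007 — 2 statements merged into one kernel-verified Lean document; each statement's English description precedes it below -/
import Mathlib

section
/- There exists a constant C depending only on the dimension d such that, for every spin configuration σ ∈ {−1,+1}^Λ and every coarse cell index k ∈ (ℤ/mℤ)^d, Σ_{l≠k} | Σ_{x∈C_k, y∈C_l} (J(x−y) − J̄(k,l)) σ(x)σ(y) | ≤ C (q^{d+1}/L) ‖∇V‖_∞, where J̄(k,l) = Q^{−2} Σ_{x∈C_k, y∈C_l} J(x−y). -/
/-!
Fix distinct cells `C_k, C_l`. As `x ∈ C_k` and `y ∈ C_l` vary, `x - y` moves by lattice vectors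
`w` with `|w_i| ≤ 2q`, and such a move changes `V((n/L) x̂)` by at most `‖∇V‖_∞ ‖w‖ / L`: if no
coordinate of the centered representative wraps around, this is the mean value theorem; if one
does, both points lie within `|w_i| / L` of the boundary of the unit ball, where `V` vanishes,
because in the scaled coordinates the torus has side `n / L ≥ 4`. So the couplings `J(x - y)` lie
within `2√d q ‖∇V‖_∞ / L^(d+1)` of each other, hence of their mean `J̄(k,l)`, and the term of `l`
is at most `Q²` times that. Finally `J(x - y) = 0` unless every coordinate of `k - l` has torus
norm at most `L/q + 1` in `ℤ/mℤ`, which leaves at most `(5L/q)^d` cells `l`; so `C = 2√d 5^d`.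
-/

open Finset

/-- Real spin value of a Boolean spin variable (`true ↦ +1`, `false ↦ −1`). -/
def spin (b : Bool) : ℝ := if b then 1 else -1

/-- Integer spin value of a Boolean spin variable. -/
def spinZ (b : Bool) : ℤ := if b then 1 else -1

/-- The microscopic lattice site of the coarse cell `C_k` with offset `a`, i.e. the point
`q·k + a` of `Λ = (ℤ/nℤ)ᵈ` with `n = m·q`. -/
def cellPoint (d m q : ℕ) (k : Fin d → ZMod m) (a : Fin d → Fin q) :
    Fin d → ZMod (m * q) :=
  fun i => ((q * (k i).val + (a i).val : ℕ) : ZMod (m * q))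

/-- The blocking map `F`: the coarse spin `η(k) = Σ_{x ∈ C_k} σ(x)`. -/
def blockF (d m q : ℕ) (σ : (Fin d → ZMod (m * q)) → Bool)
    (k : Fin d → ZMod m) : ℤ :=
  ∑ a : Fin d → Fin q, spinZ (σ (cellPoint d m q k a))

/-- The fiber `{σ : F(σ) = η}` of the blocking map over a coarse configuration `η`. -/
def fiber (d m q : ℕ) [NeZero m] [NeZero (m * q)]
    (η : (Fin d → ZMod m) → ℤ) : Finset ((Fin d → ZMod (m * q)) → Bool) :=
  Finset.univ.filter (fun σ => blockF d m q σ = η)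

/-- The microscopic Hamiltonian
`H_N(σ) = −(1/2) Σ_x Σ_{y ≠ x} J(x−y) σ(x)σ(y) + h Σ_x σ(x)` on `Λ = (ℤ/nℤ)ᵈ`. -/
noncomputable def ham (d n : ℕ) [NeZero n] (J : (Fin d → ZMod n) → ℝ) (h : ℝ)
    (σ : (Fin d → ZMod n) → Bool) : ℝ :=
  -(1 / 2) * ∑ x : Fin d → ZMod n, ∑ y ∈ Finset.univ.filter (fun y => y ≠ x),
      J (x - y) * (spin (σ x) * spin (σ y))
    + h * ∑ x : Fin d → ZMod n, spin (σ x)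

/-- The centered representative `a/n ∈ (−1/2, 1/2]` of a coordinate `c ∈ ℤ/nℤ`
(here returned as the integer part `a ∈ (−n/2, n/2]`, as a real number). -/
noncomputable def cent (n : ℕ) (c : ZMod n) : ℝ :=
  if (c.val : ℝ) ≤ (n : ℝ) / 2 then (c.val : ℝ) else (c.val : ℝ) - (n : ℝ)

/-- The centered representative `x̂ ∈ (−1/2, 1/2]ᵈ` of a torus lattice point `x`. -/
noncomputable def hat (d n : ℕ) (x : Fin d → ZMod n) : EuclideanSpace ℝ (Fin d) :=
  WithLp.toLp 2 (fun i => cent n (x i) / (n : ℝ))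

/-- The interaction `J(x) = L⁻ᵈ V((n/L) x̂)` for `x ≠ 0`, `J(0) = 0`. -/
noncomputable def Jpot (d n : ℕ) (L : ℝ) (V : EuclideanSpace ℝ (Fin d) → ℝ)
    (x : Fin d → ZMod n) : ℝ :=
  if x = 0 then 0 else (1 / L ^ d) * V (((n : ℝ) / L) • hat d n x)

namespace ZMod

variable {n : ℕ}

lemma abs_le_abs_of_intCast_eq {x y : ℤ} (hxy : (x : ZMod n) = y) (hx : 2 * |x| ≤ n) :
    |x| ≤ |y| := by
  have hx' : x.natAbs ≤ n / 2 := by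
    rw [Nat.le_div_iff_mul_le two_pos]; zify; linarith
  have := natAbs_min_of_le_div_two n x y hxy hx'
  rw [Int.abs_eq_natAbs, Int.abs_eq_natAbs]
  exact_mod_cast this

lemma two_mul_abs_valMinAbs_le [NeZero n] (x : ZMod n) : 2 * |x.valMinAbs| ≤ n := by
  obtain ⟨h₁, h₂⟩ := valMinAbs_mem_Ioc x
  cases abs_cases x.valMinAbs <;> linarith

lemma le_abs_valMinAbs_add_of_sub_ne {x x' : ZMod n} {w : ℤ} (hw : (w : ZMod n) = x - x')
    (hne : x.valMinAbs - x'.valMinAbs ≠ w) :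
    (n : ℤ) ≤ |x.valMinAbs| + |x'.valMinAbs| + |w| := by
  have hdvd : (n : ℤ) ∣ x.valMinAbs - x'.valMinAbs - w := by
    rw [← intCast_zmod_eq_zero_iff_dvd]; push_cast [hw]; ring
  calc (n : ℤ) ≤ |x.valMinAbs - x'.valMinAbs - w| :=
        Int.le_of_dvd (abs_pos.2 (sub_ne_zero.2 hne)) ((dvd_abs _ _).2 hdvd)
    _ ≤ _ := by
        have := abs_sub (x.valMinAbs - x'.valMinAbs) w
        have := abs_sub x.valMinAbs x'.valMinAbs
        linarith

lemma mul_abs_le_abs_valMinAbs_add {m q : ℕ} {e w : ℤ} (he : 2 * |e| ≤ m)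
    {x : ZMod (m * q)} (hx : ((q * e + w : ℤ) : ZMod (m * q)) = x) :
    q * |e| ≤ |x.valMinAbs| + |w| := by
  have hq : (0 : ℤ) ≤ q := Int.natCast_nonneg q
  have hcast : ((q * e : ℤ) : ZMod (m * q)) = ((x.valMinAbs - w : ℤ) : ZMod (m * q)) := by
    push_cast [coe_valMinAbs, ← hx]; ring
  have hle := abs_le_abs_of_intCast_eq hcast (by
    rw [abs_mul, abs_of_nonneg hq]; push_cast; nlinarith)
  rw [abs_mul, abs_of_nonneg hq] at hle
  exact hle.trans (abs_sub _ _)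

lemma card_filter_abs_valMinAbs_sub_le {m : ℕ} [NeZero m] (c : ZMod m) {R : ℝ}
    (hR : 0 ≤ R) : (#(univ.filter fun j : ZMod m => |((c - j).valMinAbs : ℝ)| ≤ R) : ℝ)
      ≤ 2 * R + 1 := by
  have hcard : #(univ.filter fun j : ZMod m => |((c - j).valMinAbs : ℝ)| ≤ R)
      ≤ #(Icc (-⌊R⌋) ⌊R⌋) := by
    refine card_le_card_of_injOn (fun j => (c - j).valMinAbs) (fun j hj => ?_) ?_
    · have hj : |((c - j).valMinAbs : ℝ)| ≤ R := (mem_filter.1 hj).2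
      rw [coe_Icc, Set.mem_Icc, ← abs_le, Int.le_floor]
      exact_mod_cast hj
    · intro j _ j' _ h
      simpa using h
  have hfloor : (0 : ℤ) ≤ ⌊R⌋ := Int.floor_nonneg.2 hR
  have hcardZ : (#(univ.filter fun j : ZMod m => |((c - j).valMinAbs : ℝ)| ≤ R) : ℤ)
      ≤ 2 * ⌊R⌋ + 1 := by
    rw [Int.card_Icc] at hcard; omega
  have hcardR : (#(univ.filter fun j : ZMod m => |((c - j).valMinAbs : ℝ)| ≤ R) : ℝ)
      ≤ 2 * ⌊R⌋ + 1 := by exact_mod_cast hcardZ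
  linarith [Int.floor_le R]

end ZMod

lemma cent_eq_valMinAbs (n : ℕ) [NeZero n] (c : ZMod n) : cent n c = c.valMinAbs := by
  have hiff : (c.val : ℝ) ≤ n / 2 ↔ c.val ≤ n / 2 := by
    rw [Nat.le_div_iff_mul_le two_pos, le_div_iff₀ two_pos]; norm_cast
  rw [cent, ZMod.valMinAbs_def_pos]
  by_cases h : c.val ≤ n / 2
  · rw [if_pos (hiff.2 h), if_pos h, Int.cast_natCast]
  · rw [if_neg (mt hiff.1 h), if_neg h]; push_cast; rfl

lemma smul_hat_apply {d n : ℕ} [NeZero n] {L : ℝ} (X : Fin d → ZMod n) (i : Fin d) :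
    (((n : ℝ) / L) • hat d n X) i = (X i).valMinAbs / L := by
  have hn : (n : ℝ) ≠ 0 := NeZero.ne _
  simp only [hat, PiLp.smul_apply, smul_eq_mul, cent_eq_valMinAbs]
  field_simp

lemma EuclideanSpace.norm_le_sqrt_card_mul {ι : Type*} [Fintype ι] {B : ℝ} (hB : 0 ≤ B)
    (v : EuclideanSpace ℝ ι) (hv : ∀ i, |v i| ≤ B) : ‖v‖ ≤ √(Fintype.card ι) * B := by
  calc ‖v‖ = √(∑ i, ‖v i‖ ^ 2) := EuclideanSpace.norm_eq v
    _ ≤ √(∑ _i : ι, B ^ 2) := by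
      gcongr with i
      rw [Real.norm_eq_abs]
      exact hv i
    _ = √(Fintype.card ι) * B := by
      rw [Finset.sum_const, Finset.card_univ, nsmul_eq_mul, Real.sqrt_mul (Nat.cast_nonneg _),
        Real.sqrt_sq hB]

lemma eq_zero_of_one_le_norm {E : Type*} [NormedAddCommGroup E] [NormedSpace ℝ E]
    {f : E → ℝ} (hf : Continuous f) (hsupp : ∀ z, 1 < ‖z‖ → f z = 0) {z : E}
    (hz : 1 ≤ ‖z‖) : f z = 0 := by
  have hsub : (Metric.closedBall (0 : E) 1)ᶜ ⊆ {z | f z = 0} := fun z hz' =>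
    hsupp z (by simpa using hz')
  have hz' : z ∈ closure (Metric.closedBall (0 : E) 1)ᶜ := by
    rw [closure_compl, interior_closedBall _ one_ne_zero]; simpa using hz
  exact closure_minimal hsub (isClosed_eq hf continuous_const) hz'

lemma abs_sub_le_of_norm_gradient_le {F : Type*} [NormedAddCommGroup F] [InnerProductSpace ℝ F]
    [CompleteSpace F] {f : F → ℝ} {C : ℝ} (hf : Differentiable ℝ f)
    (hC : ∀ z, ‖gradient f z‖ ≤ C) (x y : F) : |f x - f y| ≤ C * ‖x - y‖ := by
  have hfderiv (z : F) : ‖fderiv ℝ f z‖ ≤ C := by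
    simpa [gradient] using hC z
  simpa using convex_univ.norm_image_sub_le_of_norm_fderiv_le (fun z _ => hf z)
    (fun z _ => hfderiv z) (Set.mem_univ y) (Set.mem_univ x)

lemma abs_le_mul_max_one_sub_abs_apply {ι : Type*} [Fintype ι] {V : EuclideanSpace ℝ ι → ℝ}
    {C : ℝ} (hV : Differentiable ℝ V) (hC : ∀ z, ‖gradient V z‖ ≤ C)
    (hsupp : ∀ z, 1 < ‖z‖ → V z = 0) (z : EuclideanSpace ℝ ι) (i : ι) :
    |V z| ≤ C * max 0 (1 - |z i|) := by
  classical
  have hC0 : 0 ≤ C := (norm_nonneg _).trans (hC z)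
  rcases le_or_gt (|z i|) 1 with hzi | hzi
  · -- the nearest point of the slab `|y i| ≥ 1`, on which `V` vanishes
    set s : ℝ := if 0 ≤ z i then 1 else -1
    set y := z + (s - z i) • EuclideanSpace.single i (1 : ℝ)
    have hyi : |y i| = 1 := by
      simp only [y, s, PiLp.add_apply, PiLp.smul_apply, PiLp.single_apply, if_true,
        smul_eq_mul, mul_one, add_sub_cancel]
      split_ifs <;> simp
    have hVy : V y = 0 :=
      eq_zero_of_one_le_norm hV.continuous hsupp (hyi ▸ PiLp.norm_apply_le y i)
    have hdist : ‖z - y‖ = 1 - |z i| := by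
      simp only [y, sub_add_cancel_left, norm_neg, norm_smul, PiLp.norm_single,
        norm_one, mul_one, Real.norm_eq_abs, s]
      split_ifs with h
      · rw [abs_of_nonneg (by linarith [le_abs_self (z i)]), abs_of_nonneg h]
      · rw [abs_of_nonpos (by linarith [neg_abs_le (z i)]), abs_of_neg (not_le.1 h)]; ring
    calc |V z| = |V z - V y| := by rw [hVy, sub_zero]
      _ ≤ C * ‖z - y‖ := abs_sub_le_of_norm_gradient_le hV hC z y
      _ ≤ C * max 0 (1 - |z i|) := by rw [hdist]; gcongr; exact le_max_right _ _
  · rw [hsupp z (hzi.trans_le (PiLp.norm_apply_le z i)), abs_zero]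
    exact mul_nonneg hC0 (le_max_left _ _)

lemma abs_sub_smul_hat_le {d n : ℕ} [NeZero n] {V : EuclideanSpace ℝ (Fin d) → ℝ}
    {C L : ℝ} (hV : Differentiable ℝ V) (hC : ∀ z, ‖gradient V z‖ ≤ C)
    (hsupp : ∀ z, 1 < ‖z‖ → V z = 0) (hL : 0 < L) (hLn : 2 * L ≤ n)
    (X X' : Fin d → ZMod n) (w : Fin d → ℤ) (hw : ∀ i, (w i : ZMod n) = X i - X' i) :
    |V (((n : ℝ) / L) • hat d n X) - V (((n : ℝ) / L) • hat d n X')|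
      ≤ C * ‖(WithLp.toLp 2 fun i => (w i : ℝ) : EuclideanSpace ℝ (Fin d))‖ / L := by
  set z := ((n : ℝ) / L) • hat d n X
  set z' := ((n : ℝ) / L) • hat d n X'
  set W : EuclideanSpace ℝ (Fin d) := WithLp.toLp 2 fun i => (w i : ℝ)
  have hC0 : 0 ≤ C := (norm_nonneg _).trans (hC 0)
  by_cases hwrap : ∀ i, (X i).valMinAbs - (X' i).valMinAbs = w i
  · have hzz' : z - z' = L⁻¹ • W := by
      ext i
      rw [PiLp.sub_apply, smul_hat_apply, smul_hat_apply, PiLp.smul_apply, smul_eq_mul]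
      simp only [W, ← hwrap i]
      push_cast; ring
    calc |V z - V z'| ≤ C * ‖z - z'‖ := abs_sub_le_of_norm_gradient_le hV hC z z'
      _ = C * ‖W‖ / L := by
        rw [hzz', norm_smul, Real.norm_eq_abs, abs_inv, abs_of_pos hL]; ring
  · obtain ⟨i, hi⟩ := not_forall.1 hwrap
    have hsum : (n : ℝ) ≤ |((X i).valMinAbs : ℝ)| + |((X' i).valMinAbs : ℝ)| + |(w i : ℝ)| := by
      exact_mod_cast ZMod.le_abs_valMinAbs_add_of_sub_ne (hw i) hi
    have hc : 2 * |((X i).valMinAbs : ℝ)| ≤ n := by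
      exact_mod_cast ZMod.two_mul_abs_valMinAbs_le (X i)
    have hc' : 2 * |((X' i).valMinAbs : ℝ)| ≤ n := by
      exact_mod_cast ZMod.two_mul_abs_valMinAbs_le (X' i)
    have hmax : max 0 (L - |((X i).valMinAbs : ℝ)|) + max 0 (L - |((X' i).valMinAbs : ℝ)|)
        ≤ |(w i : ℝ)| := by
      rcases max_cases 0 (L - |((X i).valMinAbs : ℝ)|) with ⟨h, _⟩ | ⟨h, _⟩ <;>
      rcases max_cases 0 (L - |((X' i).valMinAbs : ℝ)|) with ⟨h', _⟩ | ⟨h', _⟩ <;>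
      rw [h, h'] <;> linarith [abs_nonneg (w i : ℝ)]
    have hbound (Y : Fin d → ZMod n) :
        |V (((n : ℝ) / L) • hat d n Y)| ≤ C * (max 0 (L - |((Y i).valMinAbs : ℝ)|) / L) := by
      have := abs_le_mul_max_one_sub_abs_apply hV hC hsupp (((n : ℝ) / L) • hat d n Y) i
      rwa [smul_hat_apply, abs_div, abs_of_pos hL, one_sub_div hL.ne', ← zero_div L,
        max_div_div_right hL.le] at this
    calc |V z - V z'| ≤ |V z| + |V z'| := abs_sub _ _
      _ ≤ C * (max 0 (L - |((X i).valMinAbs : ℝ)|) / L)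
          + C * (max 0 (L - |((X' i).valMinAbs : ℝ)|) / L) := add_le_add (hbound X) (hbound X')
      _ ≤ C * |W i| / L := by
        rw [← mul_add, ← add_div, mul_div_assoc]
        gcongr
      _ ≤ C * ‖W‖ / L := by gcongr; exact PiLp.norm_apply_le W i

section Jpot

variable {d n : ℕ} [NeZero n] {L : ℝ} {V : EuclideanSpace ℝ (Fin d) → ℝ}

lemma abs_Jpot_sub_Jpot_le {C : ℝ} (hV : Differentiable ℝ V) (hC : ∀ z, ‖gradient V z‖ ≤ C)
    (hsupp : ∀ z, 1 < ‖z‖ → V z = 0) (hL : 0 < L) (hLn : 2 * L ≤ n)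
    {X X' : Fin d → ZMod n} (hX : X ≠ 0) (hX' : X' ≠ 0) (w : Fin d → ℤ)
    (hw : ∀ i, (w i : ZMod n) = X i - X' i) :
    |Jpot d n L V X - Jpot d n L V X'|
      ≤ C * ‖(WithLp.toLp 2 fun i => (w i : ℝ) : EuclideanSpace ℝ (Fin d))‖ / L ^ (d + 1) := by
  rw [Jpot, Jpot, if_neg hX, if_neg hX', ← mul_sub, abs_mul, abs_of_pos (by positivity),
    pow_succ, ← div_div, one_div_mul_eq_div, div_right_comm]
  gcongr
  exact abs_sub_smul_hat_le hV hC hsupp hL hLn X X' w hw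

lemma Jpot_eq_zero_of_lt_abs_valMinAbs (hsupp : ∀ z, 1 < ‖z‖ → V z = 0) (hL : 0 < L)
    {X : Fin d → ZMod n} (i : Fin d) (hX : L < |((X i).valMinAbs : ℝ)|) : Jpot d n L V X = 0 := by
  rw [Jpot]
  split_ifs
  · rfl
  · rw [hsupp, mul_zero]
    refine lt_of_lt_of_le ?_ (PiLp.norm_apply_le _ i)
    rwa [smul_hat_apply, Real.norm_eq_abs, abs_div, abs_of_pos hL, one_lt_div hL]

end Jpot

section Average

variable {ι : Type*} [Fintype ι] [Nonempty ι] {x : ι → ℝ} {E : ℝ}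

lemma abs_sub_mean_le (hx : ∀ i j, |x i - x j| ≤ E) (i : ι) :
    |x i - (∑ j, x j) / Fintype.card ι| ≤ E := by
  have hcard : (0 : ℝ) < Fintype.card ι := by exact_mod_cast Fintype.card_pos
  have hmean : x i - (∑ j, x j) / Fintype.card ι = (∑ j, (x i - x j)) / Fintype.card ι := by
    rw [Finset.sum_sub_distrib, Finset.sum_const, Finset.card_univ, nsmul_eq_mul]
    field_simp
  rw [hmean, abs_div, abs_of_pos hcard, div_le_iff₀ hcard]
  calc |∑ j, (x i - x j)| ≤ ∑ j, |x i - x j| := Finset.abs_sum_le_sum_abs _ _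
    _ ≤ ∑ _j : ι, E := Finset.sum_le_sum fun j _ => hx i j
    _ = E * Fintype.card ι := by simp [mul_comm]

lemma abs_sum_sub_mean_mul_le (hx : ∀ i j, |x i - x j| ≤ E) {s : ι → ℝ}
    (hs : ∀ i, |s i| ≤ 1) :
    |∑ i, (x i - (∑ j, x j) / Fintype.card ι) * s i| ≤ Fintype.card ι * E := by
  have hE : 0 ≤ E := (abs_nonneg _).trans (hx (Classical.arbitrary ι) (Classical.arbitrary ι))
  calc |∑ i, (x i - (∑ j, x j) / Fintype.card ι) * s i|
      ≤ ∑ i, |(x i - (∑ j, x j) / Fintype.card ι) * s i| := Finset.abs_sum_le_sum_abs _ _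
    _ ≤ ∑ _i : ι, E := by
      gcongr with i
      rw [abs_mul]
      simpa using mul_le_mul (abs_sub_mean_le hx i) (hs i) (abs_nonneg _) hE
    _ = Fintype.card ι * E := by simp

end Average

lemma abs_sum_sum_sub_mean_mul_le {α β : Type*} [Fintype α] [Fintype β] [Nonempty α]
    [Nonempty β] {x s : α → β → ℝ} {E : ℝ} (hx : ∀ a b a' b', |x a b - x a' b'| ≤ E)
    (hs : ∀ a b, |s a b| ≤ 1) :
    |∑ a, ∑ b, (x a b - (∑ a', ∑ b', x a' b') / (Fintype.card α * Fintype.card β)) * s a b|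
      ≤ Fintype.card α * Fintype.card β * E := by
  have := abs_sum_sub_mean_mul_le (x := fun p : α × β => x p.1 p.2) (E := E)
    (fun p p' => hx p.1 p.2 p'.1 p'.2) (s := fun p => s p.1 p.2) (fun p => hs p.1 p.2)
  simpa only [Fintype.sum_prod_type, Fintype.card_prod, Nat.cast_mul] using this

section Cells

variable {d m q : ℕ} [NeZero m]

lemma val_cellPoint_apply (k : Fin d → ZMod m) (a : Fin d → Fin q) (i : Fin d) :
    (cellPoint d m q k a i).val = q * (k i).val + a i :=
  ZMod.val_natCast_of_lt (by nlinarith [ZMod.val_lt (k i), (a i).isLt])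

lemma cellPoint_sub_cellPoint_ne_zero {k l : Fin d → ZMod m} (hkl : k ≠ l)
    (a b : Fin d → Fin q) : cellPoint d m q k a - cellPoint d m q l b ≠ 0 := by
  rw [sub_ne_zero]
  intro h
  refine hkl (funext fun i => ZMod.val_injective _ ?_)
  have hq : 0 < q := Fin.pos (a i)
  have h := congrArg (fun x => (x i).val / q) h
  simpa [val_cellPoint_apply, Nat.mul_add_div hq, Nat.div_eq_of_lt] using h

lemma cellPoint_sub_cellPoint_apply (k l : Fin d → ZMod m) (a b : Fin d → Fin q)
    (i : Fin d) {e : ℤ} (he : (e : ZMod m) = k i - l i) :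
    (cellPoint d m q k a - cellPoint d m q l b) i
      = ((q * e + ((a i : ℤ) - b i) : ℤ) : ZMod (m * q)) := by
  obtain ⟨t, ht⟩ : (m : ℤ) ∣ ((k i).val - (l i).val) - e := by
    rw [← ZMod.intCast_eq_intCast_iff_dvd_sub, he]; simp
  have hcast : ((q * e + ((a i : ℤ) - b i) : ℤ) : ZMod (m * q))
      = ((q * (k i).val + a i - (q * (l i).val + b i) : ℤ) : ZMod (m * q)) := by
    rw [ZMod.intCast_eq_intCast_iff_dvd_sub]
    exact ⟨t, by push_cast; linear_combination q * ht⟩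
  rw [hcast]
  simp only [Pi.sub_apply, cellPoint]
  push_cast; ring

end Cells

noncomputable def nearCells {d : ℕ} (m q : ℕ) [NeZero m] (L : ℝ) (k : Fin d → ZMod m) :
    Finset (Fin d → ZMod m) :=
  Fintype.piFinset fun i => univ.filter fun j => |((k i - j).valMinAbs : ℝ)| ≤ L / q + 1

lemma card_nearCells_le {d m q : ℕ} [NeZero m] {L : ℝ} (hq : 0 < q) (hqL : q ≤ L)
    (k : Fin d → ZMod m) : (#(nearCells m q L k) : ℝ) ≤ (5 * L / q) ^ d := by
  have hLq : 1 ≤ L / q := by rw [le_div_iff₀ (by exact_mod_cast hq)]; simpa using hqL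
  rw [nearCells, Fintype.card_piFinset, Nat.cast_prod]
  calc ∏ i, (#(univ.filter fun j => |((k i - j).valMinAbs : ℝ)| ≤ L / q + 1) : ℝ)
      ≤ ∏ _i : Fin d, (5 * L / q) := by
        gcongr with i
        calc _ ≤ 2 * (L / q + 1) + 1 := ZMod.card_filter_abs_valMinAbs_sub_le _ (by linarith)
          _ ≤ 5 * L / q := by rw [mul_div_assoc]; linarith
    _ = (5 * L / q) ^ d := by rw [prod_const, card_univ, Fintype.card_fin]

lemma abs_spin (b : Bool) : |spin b| = 1 := by
  cases b <;> simp [spin]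

noncomputable def cellMeanCoupling (d m q : ℕ) (L : ℝ) (V : EuclideanSpace ℝ (Fin d) → ℝ)
    (k l : Fin d → ZMod m) : ℝ :=
  (∑ a : Fin d → Fin q, ∑ b : Fin d → Fin q,
    Jpot d (m * q) L V (cellPoint d m q k a - cellPoint d m q l b)) / ((q : ℝ) ^ d) ^ 2

noncomputable def cellFluctuation (d m q : ℕ) (L : ℝ) (V : EuclideanSpace ℝ (Fin d) → ℝ)
    (σ : (Fin d → ZMod (m * q)) → Bool) (k l : Fin d → ZMod m) : ℝ :=
  |∑ a : Fin d → Fin q, ∑ b : Fin d → Fin q,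
    (Jpot d (m * q) L V (cellPoint d m q k a - cellPoint d m q l b)
        - cellMeanCoupling d m q L V k l)
      * (spin (σ (cellPoint d m q k a)) * spin (σ (cellPoint d m q l b)))|

section Fluctuation

variable {d m q : ℕ} [NeZero m] [NeZero (m * q)] {L : ℝ} {V : EuclideanSpace ℝ (Fin d) → ℝ}

lemma cellFluctuation_eq_zero_of_notMem_nearCells (hsupp : ∀ z, 1 < ‖z‖ → V z = 0)
    (hq : 0 < q) (hL : 0 < L) (σ : (Fin d → ZMod (m * q)) → Bool) {k l : Fin d → ZMod m}
    (hl : l ∉ nearCells m q L k) : cellFluctuation d m q L V σ k l = 0 := by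
  obtain ⟨i, hi⟩ : ∃ i, L / q + 1 < |((k i - l i).valMinAbs : ℝ)| := by
    simpa [nearCells, Fintype.mem_piFinset] using hl
  have hqR : (0 : ℝ) < q := by exact_mod_cast hq
  have hJ (a b : Fin d → Fin q) :
      Jpot d (m * q) L V (cellPoint d m q k a - cellPoint d m q l b) = 0 := by
    refine Jpot_eq_zero_of_lt_abs_valMinAbs hsupp hL i ?_
    have hexp := ZMod.mul_abs_le_abs_valMinAbs_add (ZMod.two_mul_abs_valMinAbs_le (k i - l i))
      (cellPoint_sub_cellPoint_apply k l a b i (ZMod.coe_valMinAbs _)).symm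
    have hw : |((a i : ℤ) - b i)| < q := abs_sub_lt_iff.2 ⟨by omega, by omega⟩
    have hexpR : (q : ℝ) * |((k i - l i).valMinAbs : ℝ)|
        ≤ |(((cellPoint d m q k a - cellPoint d m q l b) i).valMinAbs : ℝ)|
          + |(((a i : ℤ) - b i : ℤ) : ℝ)| := by exact_mod_cast hexp
    have hwR : |(((a i : ℤ) - b i : ℤ) : ℝ)| < q := by exact_mod_cast hw
    have hfar : L + q < q * |((k i - l i).valMinAbs : ℝ)| := by
      rwa [div_add_one hqR.ne', div_lt_iff₀' hqR] at hi
    linarith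
  simp [cellFluctuation, cellMeanCoupling, hJ]

lemma cellFluctuation_le [NeZero q] {C : ℝ} (hV : Differentiable ℝ V)
    (hC : ∀ z, ‖gradient V z‖ ≤ C) (hsupp : ∀ z, 1 < ‖z‖ → V z = 0) (hL : 0 < L)
    (hLn : 2 * L ≤ ((m * q : ℕ) : ℝ)) (σ : (Fin d → ZMod (m * q)) → Bool)
    {k l : Fin d → ZMod m} (hkl : l ≠ k) :
    cellFluctuation d m q L V σ k l
      ≤ ((q : ℝ) ^ d) ^ 2 * (C * (√d * (2 * q)) / L ^ (d + 1)) := by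
  have hcard : ((q : ℝ) ^ d) ^ 2
      = Fintype.card (Fin d → Fin q) * Fintype.card (Fin d → Fin q) := by simp [sq]
  rw [cellFluctuation, cellMeanCoupling, hcard]
  refine abs_sum_sum_sub_mean_mul_le (fun a b a' b' => ?_) (fun a b => ?_)
  · set w : Fin d → ℤ := fun i => ((a i : ℤ) - b i) - ((a' i : ℤ) - b' i)
    have hw (i : Fin d) : (w i : ZMod (m * q)) = (cellPoint d m q k a - cellPoint d m q l b) i
        - (cellPoint d m q k a' - cellPoint d m q l b') i := by
      rw [cellPoint_sub_cellPoint_apply k l a b i (ZMod.coe_valMinAbs _),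
        cellPoint_sub_cellPoint_apply k l a' b' i (ZMod.coe_valMinAbs _)]
      push_cast [w]; ring
    refine (abs_Jpot_sub_Jpot_le hV hC hsupp hL hLn
      (cellPoint_sub_cellPoint_ne_zero hkl.symm a b)
      (cellPoint_sub_cellPoint_ne_zero hkl.symm a' b') w hw).trans ?_
    have hC0 : 0 ≤ C := (norm_nonneg _).trans (hC 0)
    have hw_le (i : Fin d) : |w i| ≤ 2 * q := by
      simp only [w]
      have := (a i).isLt; have := (b i).isLt; have := (a' i).isLt; have := (b' i).isLt
      exact abs_le.2 ⟨by omega, by omega⟩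
    gcongr
    simpa using EuclideanSpace.norm_le_sqrt_card_mul (B := 2 * (q : ℝ)) (by positivity)
      (WithLp.toLp 2 fun i => (w i : ℝ)) fun i => by
        show |((w i : ℤ) : ℝ)| ≤ 2 * q
        exact_mod_cast hw_le i
  · rw [abs_mul, abs_spin, abs_spin, one_mul]

end Fluctuation

theorem cell_fluctuation_bound_general
    (d : ℕ) :
    ∃ C : ℝ, ∀ (m q : ℕ) [NeZero m] [NeZero (m * q)], 1 ≤ m → 2 ≤ q →
      ∀ V : EuclideanSpace ℝ (Fin d) → ℝ, ContDiff ℝ 1 V →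
        (∀ z, V (-z) = V z) →
        (∀ z, 1 < ‖z‖ → V z = 0) →
        ∀ GV : ℝ, (∀ z, ‖gradient V z‖ ≤ GV) →
          ∀ L : ℝ, (q : ℝ) ≤ L → L ≤ ((m : ℝ) * (q : ℝ)) / 4 →
            ∀ σ : (Fin d → ZMod (m * q)) → Bool, ∀ k : Fin d → ZMod m,
              ∑ l ∈ Finset.univ.filter (fun l => l ≠ k),
                |∑ a : Fin d → Fin q, ∑ b : Fin d → Fin q,
                    (Jpot d (m * q) L V (cellPoint d m q k a - cellPoint d m q l b)
                        - (∑ a' : Fin d → Fin q, ∑ b' : Fin d → Fin q,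
                            Jpot d (m * q) L V
                              (cellPoint d m q k a' - cellPoint d m q l b'))
                          / ((q : ℝ) ^ d) ^ 2)
                      * (spin (σ (cellPoint d m q k a)) * spin (σ (cellPoint d m q l b)))|
                ≤ C * ((q : ℝ) ^ (d + 1) / L) * GV := by
  refine ⟨2 * √d * 5 ^ d, ?_⟩
  intro m q _ _ _ hq V hV _ hsupp GV hGV L hqL hLn σ k
  have : NeZero q := ⟨by omega⟩
  have hq0 : (0 : ℝ) < q := by positivity
  have hL : 0 < L := hq0.trans_le hqL
  have hGV0 : 0 ≤ GV := (norm_nonneg _).trans (hGV 0)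
  have hV' : Differentiable ℝ V := hV.differentiable one_ne_zero
  set E := ((q : ℝ) ^ d) ^ 2 * (GV * (√d * (2 * q)) / L ^ (d + 1))
  have hE : 0 ≤ E := by positivity
  set others := univ.filter (fun l => l ≠ k)
  show ∑ l ∈ others, cellFluctuation d m q L V σ k l ≤ _
  calc ∑ l ∈ others, cellFluctuation d m q L V σ k l
      = ∑ l ∈ others with l ∈ nearCells m q L k, cellFluctuation d m q L V σ k l :=
        (sum_filter_of_ne fun l _ hl => by_contra fun hnear =>
          hl (cellFluctuation_eq_zero_of_notMem_nearCells hsupp (by omega) hL σ hnear)).symm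
    _ ≤ #(others.filter fun l => l ∈ nearCells m q L k) * E := by
        rw [← nsmul_eq_mul]
        exact sum_le_card_nsmul _ _ _ fun l hl => cellFluctuation_le hV' hGV hsupp hL
          (by push_cast; linarith) σ (mem_filter.1 (mem_filter.1 hl).1).2
    _ ≤ #(nearCells m q L k) * E := by
        gcongr
        exact fun _ hl => (mem_filter.1 hl).2
    _ ≤ (5 * L / q) ^ d * E := by gcongr; exact card_nearCells_le (by omega) hqL k
    _ = 2 * √d * 5 ^ d * ((q : ℝ) ^ (d + 1) / L) * GV := by
        simp only [E]
        rw [div_pow]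
        field_simp
        ring

/-- **Summed fluctuation bound over a coarse cell:** there is a constant `C` depending only
on the dimension `d` such that for every spin configuration `σ` and every coarse cell `k`,
`Σ_{l≠k} |Σ_{x∈C_k, y∈C_l} (J(x−y) − J̄(k,l)) σ(x)σ(y)| ≤ C (q^{d+1}/L) ‖∇V‖_∞`. -/
theorem cell_fluctuation_bound
    (d : ℕ) (hd : 1 ≤ d) :
    ∃ C : ℝ, ∀ (m q : ℕ) [NeZero m] [NeZero (m * q)], 1 ≤ m → 2 ≤ q →
      ∀ V : EuclideanSpace ℝ (Fin d) → ℝ, ContDiff ℝ 1 V →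
        (∀ z, V (-z) = V z) →
        (∀ z, 1 < ‖z‖ → V z = 0) →
        ∀ GV : ℝ, (∀ z, ‖gradient V z‖ ≤ GV) →
          ∀ L : ℝ, (q : ℝ) ≤ L → L ≤ ((m : ℝ) * (q : ℝ)) / 4 →
            ∀ σ : (Fin d → ZMod (m * q)) → Bool, ∀ k : Fin d → ZMod m,
              ∑ l ∈ Finset.univ.filter (fun l => l ≠ k),
                |∑ a : Fin d → Fin q, ∑ b : Fin d → Fin q,
                    (Jpot d (m * q) L V (cellPoint d m q k a - cellPoint d m q l b)
                        - (∑ a' : Fin d → Fin q, ∑ b' : Fin d → Fin q,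
                            Jpot d (m * q) L V
                              (cellPoint d m q k a' - cellPoint d m q l b'))
                          / ((q : ℝ) ^ d) ^ 2)
                      * (spin (σ (cellPoint d m q k a)) * spin (σ (cellPoint d m q l b)))|
                ≤ C * ((q : ℝ) ^ (d + 1) / L) * GV :=
  cell_fluctuation_bound_general d
end

section
/- Assume Q ≥ 2, let k₁, k₂, k₃ be three pairwise distinct cells, let η be a coarse configuration with P̄(η) > 0, and set α_i = (η(k_i)+Q)/2 for i = 1,2,3. Let a(x,y) = J(x−y) − J̄(k₁,k₂) for x ∈ C_{k₁}, y ∈ C_{k₂} and b(y,z) = J(y−z) − J̄(k₂,k₃) for y ∈ C_{k₂}, z ∈ C_{k₃}, where J̄(k,l) = Q^{−2} Σ_{x∈C_k, y∈C_l} J(x−y), and define j² = Σ_{x∈C_{k₁}} Σ_{y∈C_{k₂}} Σ_{z∈C_{k₃}} a(x,y) b(y,z). Then the conditional cross moment of the fluctuations S₁(σ) = Σ_{x∈C_{k₁}, y∈C_{k₂}} a(x,y) σ(x)σ(y) and S₂(σ) = Σ_{y∈C_{k₂}, z∈C_{k₃}} b(y,z) σ(y)σ(z) satisfies E[S₁ S₂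 | F = η] = j² · E₁(α₁) E₁(α₃) (1 − E₂(α₂)). -/
open Finset

/-! ### Auxiliary lemmas -/

set_option linter.unusedSectionVars false

lemma spin_eq_cast (b : Bool) : spin b = (spinZ b : ℝ) := by
  cases b <;> simp [spin, spinZ]

lemma spin_mul_self (b : Bool) : spin b * spin b = 1 := by
  cases b <;> norm_num [spin]

section Cell
variable {A : Type*} [Fintype A] [DecidableEq A]

def cellSum (t : A → Bool) : ℤ := ∑ a, spinZ (t a)

def cellFib (A : Type*) [Fintype A] [DecidableEq A] (v : ℤ) : Finset (A → Bool) :=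
  univ.filter (fun t => cellSum t = v)

lemma mem_cellFib {v : ℤ} {t : A → Bool} : t ∈ cellFib A v ↔ cellSum t = v := by
  simp [cellFib]

lemma sum_spin_of_mem {v : ℤ} {t : A → Bool} (ht : t ∈ cellFib A v) :
    ∑ a : A, spin (t a) = (v : ℝ) := by
  rw [mem_cellFib] at ht
  rw [← ht]
  simp [cellSum, spin_eq_cast]

lemma cellFib_sum_comp (v : ℤ) (e : A ≃ A) (g : (A → Bool) → ℝ) :
    ∑ t ∈ cellFib A v, g (t ∘ e) = ∑ t ∈ cellFib A v, g t := by
  refine Finset.sum_nbij' (fun t => t ∘ e) (fun t => t ∘ e.symm) ?_ ?_ ?_ ?_ ?_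
  · intro t ht
    rw [mem_cellFib] at ht ⊢
    rw [← ht]
    exact Fintype.sum_equiv e _ _ (fun a => rfl)
  · intro t ht
    rw [mem_cellFib] at ht ⊢
    rw [← ht]
    exact Fintype.sum_equiv e.symm _ _ (fun a => rfl)
  · intro t _; funext a; simp
  · intro t _; funext a; simp
  · intro t _; rfl

lemma exists_perm_pair {b b' c c' : A} (hb : b ≠ b') (hc : c ≠ c') :
    ∃ e : A ≃ A, e b = c ∧ e b' = c' := by
  refine ⟨(Equiv.swap b c).trans (Equiv.swap ((Equiv.swap b c) b') c'), ?_, ?_⟩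
  · simp only [Equiv.trans_apply, Equiv.swap_apply_left]
    rw [Equiv.swap_apply_of_ne_of_ne]
    · intro h
      exact hb (((Equiv.swap b c).injective (by rw [Equiv.swap_apply_left, ← h])).symm)
    · exact hc
  · simp only [Equiv.trans_apply, Equiv.swap_apply_left]

lemma moment_one (v : ℤ) (a : A) :
    (Fintype.card A : ℝ) * ∑ t ∈ cellFib A v, spin (t a)
      = ((cellFib A v).card : ℝ) * v := by
  have hsym : ∀ a' : A, ∑ t ∈ cellFib A v, spin (t a') = ∑ t ∈ cellFib A v, spin (t a) := by
    intro a'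
    have := cellFib_sum_comp v (Equiv.swap a a') (fun t => spin (t a))
    simpa using this
  calc (Fintype.card A : ℝ) * ∑ t ∈ cellFib A v, spin (t a)
      = ∑ a' : A, ∑ t ∈ cellFib A v, spin (t a') := by
        rw [Finset.sum_congr rfl (fun a' _ => hsym a')]
        simp [Finset.sum_const, card_univ, mul_comm]
    _ = ∑ t ∈ cellFib A v, ∑ a' : A, spin (t a') := Finset.sum_comm
    _ = ∑ t ∈ cellFib A v, (v : ℝ) := Finset.sum_congr rfl (fun t ht => sum_spin_of_mem ht)
    _ = ((cellFib A v).card : ℝ) * v := by simp [mul_comm]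

lemma moment_two (v : ℤ) {b b' : A} (hbb : b ≠ b') :
    ((Fintype.card A : ℝ) * ((Fintype.card A : ℝ) - 1))
        * ∑ t ∈ cellFib A v, spin (t b) * spin (t b')
      = ((cellFib A v).card : ℝ) * ((v : ℝ) ^ 2 - (Fintype.card A : ℝ)) := by
  set S := ∑ t ∈ cellFib A v, spin (t b) * spin (t b') with hS
  have hsym : ∀ c c' : A, c ≠ c' →
      ∑ t ∈ cellFib A v, spin (t c) * spin (t c') = S := by
    intro c c' hcc
    obtain ⟨e, he1, he2⟩ := exists_perm_pair hcc hbb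
    have := cellFib_sum_comp v e (fun t => spin (t c) * spin (t c'))
    rw [hS]
    simpa [Function.comp, he1, he2] using this.symm
  have hA1 : 1 ≤ Fintype.card A := Fintype.card_pos_iff.mpr ⟨b⟩
  have hfull : ∑ c : A, ∑ c' : A, ∑ t ∈ cellFib A v, spin (t c) * spin (t c')
      = ((cellFib A v).card : ℝ) * (v : ℝ) ^ 2 := by
    calc ∑ c : A, ∑ c' : A, ∑ t ∈ cellFib A v, spin (t c) * spin (t c')
        = ∑ c : A, ∑ t ∈ cellFib A v, ∑ c' : A, spin (t c) * spin (t c') :=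
          Finset.sum_congr rfl (fun c _ => Finset.sum_comm)
      _ = ∑ t ∈ cellFib A v, ∑ c : A, ∑ c' : A, spin (t c) * spin (t c') := Finset.sum_comm
      _ = ∑ t ∈ cellFib A v, (v : ℝ) ^ 2 := by
          refine Finset.sum_congr rfl (fun t ht => ?_)
          rw [← Finset.sum_mul_sum, sum_spin_of_mem ht, sq]
      _ = ((cellFib A v).card : ℝ) * (v : ℝ) ^ 2 := by simp [mul_comm]
  have hdiag : ∀ c : A, ∑ t ∈ cellFib A v, spin (t c) * spin (t c)
      = ((cellFib A v).card : ℝ) := by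
    intro c
    rw [Finset.sum_congr rfl (fun t _ => spin_mul_self (t c))]
    simp
  have hsplit : ∀ c : A, ∑ c' : A, ∑ t ∈ cellFib A v, spin (t c) * spin (t c')
      = ((Fintype.card A : ℝ) - 1) * S + ((cellFib A v).card : ℝ) := by
    intro c
    rw [← Finset.sum_erase_add univ _ (mem_univ c), hdiag c]
    congr 1
    rw [Finset.sum_congr rfl (fun c' hc' => hsym c c' (fun h => (mem_erase.mp hc').1 h.symm))]
    rw [Finset.sum_const, card_erase_of_mem (mem_univ c), card_univ, nsmul_eq_mul]
    congr 1
    push_cast [Nat.cast_sub hA1]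
    ring
  have hN1 : ∑ c : A, ∑ c' : A, ∑ t ∈ cellFib A v, spin (t c) * spin (t c')
      = (Fintype.card A : ℝ) * (((Fintype.card A : ℝ) - 1) * S
          + ((cellFib A v).card : ℝ)) := by
    rw [Finset.sum_congr rfl (fun c _ => hsplit c), Finset.sum_const, card_univ, nsmul_eq_mul]
  have h := hfull.symm.trans hN1
  nlinarith [h]

end Cell

lemma q_ne_zero (m q : ℕ) [NeZero (m * q)] : q ≠ 0 := by
  intro h
  exact (NeZero.ne (m * q)) (by simp [h])

section Bij
variable (d m q : ℕ) [NeZero m] [NeZero (m * q)]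

lemma coord_inj {k k' : ZMod m} {a a' : Fin q}
    (h : ((q * k.val + a.val : ℕ) : ZMod (m * q)) = ((q * k'.val + a'.val : ℕ) : ZMod (m * q))) :
    k = k' ∧ a = a' := by
  have hq : 0 < q := Nat.pos_of_ne_zero (q_ne_zero m q)
  have hb : ∀ kk : ZMod m, ∀ aa : Fin q, q * kk.val + aa.val < m * q := by
    intro kk aa
    have h1 : kk.val < m := ZMod.val_lt kk
    calc q * kk.val + aa.val < q * kk.val + q := by omega
      _ = q * (kk.val + 1) := by ring
      _ ≤ q * m := Nat.mul_le_mul_left q h1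
      _ = m * q := Nat.mul_comm q m
  have hn : (q * k.val + a.val : ℕ) = (q * k'.val + a'.val : ℕ) := by
    have := (ZMod.val_cast_of_lt (hb k a)).symm.trans
      (congrArg ZMod.val h |>.trans (ZMod.val_cast_of_lt (hb k' a')))
    exact this
  have hmod : a.val = a'.val := by
    have h1 : (a.val + k.val * q) % q = (a'.val + k'.val * q) % q := by
      rw [show a.val + k.val * q = q * k.val + a.val by ring,
        show a'.val + k'.val * q = q * k'.val + a'.val by ring] at *
      rw [hn]
    rwa [Nat.add_mul_mod_self_right, Nat.add_mul_mod_self_right,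
      Nat.mod_eq_of_lt a.isLt, Nat.mod_eq_of_lt a'.isLt] at h1
  have hdiv : q * k.val = q * k'.val := by omega
  exact ⟨ZMod.val_injective _ (Nat.eq_of_mul_eq_mul_left hq hdiv), Fin.ext hmod⟩

lemma cellPoint_injective :
    Function.Injective (fun p : (Fin d → ZMod m) × (Fin d → Fin q) =>
      cellPoint d m q p.1 p.2) := by
  rintro ⟨k, a⟩ ⟨k', a'⟩ h
  simp only [cellPoint] at h
  have h' : ∀ i, ((q * (k i).val + (a i).val : ℕ) : ZMod (m * q))
      = ((q * (k' i).val + (a' i).val : ℕ) : ZMod (m * q)) := fun i => congrFun h i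
  have : ∀ i, k i = k' i ∧ a i = a' i := fun i => coord_inj m q (h' i)
  exact Prod.ext (funext fun i => (this i).1) (funext fun i => (this i).2)

set_option synthInstance.maxHeartbeats 1000000 in
lemma cellPoint_bijective :
    Function.Bijective (fun p : (Fin d → ZMod m) × (Fin d → Fin q) =>
      cellPoint d m q p.1 p.2) := by
  have hcard : Fintype.card ((Fin d → ZMod m) × (Fin d → Fin q))
      = Fintype.card (Fin d → ZMod (m * q)) := by
    simp [Fintype.card_fun, ZMod.card, mul_pow]
  exact (Fintype.bijective_iff_injective_and_card _).mpr
    ⟨cellPoint_injective d m q, hcard⟩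

noncomputable def cellEquiv : ((Fin d → ZMod m) × (Fin d → Fin q)) ≃ (Fin d → ZMod (m * q)) :=
  Equiv.ofBijective _ (cellPoint_bijective d m q)

lemma cellEquiv_symm_cellPoint (k : Fin d → ZMod m) (a : Fin d → Fin q) :
    (cellEquiv d m q).symm (cellPoint d m q k a) = (k, a) :=
  (cellEquiv d m q).symm_apply_apply (k, a)

lemma fiber_sum_reindex (η : (Fin d → ZMod m) → ℤ)
    (f : ((Fin d → ZMod m) → (Fin d → Fin q) → Bool) → ℝ) :
    ∑ σ ∈ fiber d m q η, f (fun k a => σ (cellPoint d m q k a))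
      = ∑ τ ∈ Fintype.piFinset (fun k : Fin d → ZMod m => cellFib (Fin d → Fin q) (η k)),
          f τ := by
  refine Finset.sum_nbij' (fun σ => fun k a => σ (cellPoint d m q k a))
    (fun τ => fun x => τ ((cellEquiv d m q).symm x).1 ((cellEquiv d m q).symm x).2)
    ?_ ?_ ?_ ?_ ?_
  · intro σ hσ
    rw [fiber, Finset.mem_filter] at hσ
    rw [Fintype.mem_piFinset]
    intro k
    rw [cellFib, Finset.mem_filter]
    refine ⟨Finset.mem_univ _, ?_⟩
    have := congrFun hσ.2 k
    rw [blockF] at this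
    exact this
  · intro τ hτ
    rw [Fintype.mem_piFinset] at hτ
    rw [fiber, Finset.mem_filter]
    refine ⟨Finset.mem_univ _, funext fun k => ?_⟩
    rw [blockF]
    have h1 : ∀ a, (cellEquiv d m q).symm (cellPoint d m q k a) = (k, a) :=
      cellEquiv_symm_cellPoint d m q k
    simp only [h1]
    have := hτ k
    rw [cellFib, Finset.mem_filter] at this
    exact this.2
  · intro σ _
    funext x
    have : cellPoint d m q ((cellEquiv d m q).symm x).1 ((cellEquiv d m q).symm x).2 = x := by
      have := (cellEquiv d m q).apply_symm_apply x
      rwa [show (cellEquiv d m q) (((cellEquiv d m q).symm x).1, ((cellEquiv d m q).symm x).2)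
        = cellPoint d m q ((cellEquiv d m q).symm x).1 ((cellEquiv d m q).symm x).2 from rfl] at this
    exact congrArg σ this
  · intro τ _
    funext k a
    exact congrArg (fun p : (Fin d → ZMod m) × (Fin d → Fin q) => τ p.1 p.2)
      (cellEquiv_symm_cellPoint d m q k a)
  · intro σ _
    rfl

end Bij

set_option maxHeartbeats 1000000 in
/-- **Conditional cross moment of fluctuations over three cells:** with
`S₁(σ) = Σ_{x∈C_{k₁}, y∈C_{k₂}} a(x,y) σ(x)σ(y)`,
`S₂(σ) = Σ_{y∈C_{k₂}, z∈C_{k₃}} b(y,z) σ(y)σ(z)`, one has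
`E[S₁S₂ | F = η] = j²·E₁(α₁)E₁(α₃)(1 − E₂(α₂))`. -/
theorem fluctuation_cross_moment
    (d m q : ℕ) [NeZero m] [NeZero (m * q)] (hd : 1 ≤ d) (hm : 1 ≤ m)
    (hQ : 2 ≤ q ^ d)
    (J : (Fin d → ZMod (m * q)) → ℝ) (hJeven : ∀ x, J (-x) = J x) (hJ0 : J 0 = 0)
    (k₁ k₂ k₃ : Fin d → ZMod m)
    (h12 : k₁ ≠ k₂) (h13 : k₁ ≠ k₃) (h23 : k₂ ≠ k₃)
    (η : (Fin d → ZMod m) → ℤ) (hη : (fiber d m q η).Nonempty)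
    (α₁ α₂ α₃ : ℕ)
    (hα₁ : η k₁ + (q ^ d : ℤ) = 2 * (α₁ : ℤ))
    (hα₂ : η k₂ + (q ^ d : ℤ) = 2 * (α₂ : ℤ))
    (hα₃ : η k₃ + (q ^ d : ℤ) = 2 * (α₃ : ℤ))
    (E₁ : ℕ → ℝ)
    (hE₁ : ∀ a : ℕ, E₁ a = (2 * (a : ℝ) - (q : ℝ) ^ d) / (q : ℝ) ^ d)
    (E₂ : ℕ → ℝ)
    (hE₂ : ∀ a : ℕ, E₂ a =
      ((a : ℝ) * ((a : ℝ) - 1) - 2 * (a : ℝ) * ((q : ℝ) ^ d - (a : ℝ))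
          + ((q : ℝ) ^ d - (a : ℝ)) * (((q : ℝ) ^ d - (a : ℝ)) - 1))
        / ((q : ℝ) ^ d * ((q : ℝ) ^ d - 1)))
    (aJ : (Fin d → Fin q) → (Fin d → Fin q) → ℝ)
    (haJ : ∀ a b, aJ a b =
      J (cellPoint d m q k₁ a - cellPoint d m q k₂ b)
        - (∑ a' : Fin d → Fin q, ∑ b' : Fin d → Fin q,
            J (cellPoint d m q k₁ a' - cellPoint d m q k₂ b')) / ((q : ℝ) ^ d) ^ 2)
    (bJ : (Fin d → Fin q) → (Fin d → Fin q) → ℝ)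
    (hbJ : ∀ b c, bJ b c =
      J (cellPoint d m q k₂ b - cellPoint d m q k₃ c)
        - (∑ b' : Fin d → Fin q, ∑ c' : Fin d → Fin q,
            J (cellPoint d m q k₂ b' - cellPoint d m q k₃ c')) / ((q : ℝ) ^ d) ^ 2)
    (j₂ : ℝ)
    (hj₂ : j₂ = ∑ a : Fin d → Fin q, ∑ b : Fin d → Fin q, ∑ c : Fin d → Fin q,
        aJ a b * bJ b c)
    (S₁ S₂ : ((Fin d → ZMod (m * q)) → Bool) → ℝ)
    (hS₁ : ∀ σ, S₁ σ = ∑ a : Fin d → Fin q, ∑ b : Fin d → Fin q,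
        aJ a b * (spin (σ (cellPoint d m q k₁ a)) * spin (σ (cellPoint d m q k₂ b))))
    (hS₂ : ∀ σ, S₂ σ = ∑ b : Fin d → Fin q, ∑ c : Fin d → Fin q,
        bJ b c * (spin (σ (cellPoint d m q k₂ b)) * spin (σ (cellPoint d m q k₃ c)))) :
    (∑ σ ∈ fiber d m q η, S₁ σ * S₂ σ) / ((fiber d m q η).card : ℝ)
      = j₂ * E₁ α₁ * E₁ α₃ * (1 - E₂ α₂) := by
  classical
  have hcardA : Fintype.card (Fin d → Fin q) = q ^ d := by simp
  set Qr : ℝ := (q : ℝ) ^ d with hQr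
  have hQrcast : ((q ^ d : ℕ) : ℝ) = Qr := by rw [hQr]; push_cast; ring
  have hQr2 : (2 : ℝ) ≤ Qr := by rw [← hQrcast]; exact_mod_cast hQ
  have hQr0 : Qr ≠ 0 := by linarith
  have hQr1 : Qr - 1 ≠ 0 := by linarith
  have hcardAR : ((Fintype.card (Fin d → Fin q)) : ℝ) = Qr := by rw [hcardA, hQrcast]
  -- real values of the coarse spins
  have hv1 : (η k₁ : ℝ) = 2 * (α₁ : ℝ) - Qr := by
    have h2 : ((η k₁ + (q ^ d : ℤ) : ℤ) : ℝ) = ((2 * (α₁ : ℤ) : ℤ) : ℝ) := by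
      exact_mod_cast congrArg (fun z : ℤ => (z : ℝ)) hα₁
    push_cast at h2
    rw [hQr]; linarith
  have hv2 : (η k₂ : ℝ) = 2 * (α₂ : ℝ) - Qr := by
    have h2 : ((η k₂ + (q ^ d : ℤ) : ℤ) : ℝ) = ((2 * (α₂ : ℤ) : ℤ) : ℝ) := by
      exact_mod_cast congrArg (fun z : ℤ => (z : ℝ)) hα₂
    push_cast at h2
    rw [hQr]; linarith
  have hv3 : (η k₃ : ℝ) = 2 * (α₃ : ℝ) - Qr := by
    have h2 : ((η k₃ + (q ^ d : ℤ) : ℤ) : ℝ) = ((2 * (α₃ : ℤ) : ℤ) : ℝ) := by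
      exact_mod_cast congrArg (fun z : ℤ => (z : ℝ)) hα₃
    push_cast at h2
    rw [hQr]; linarith
  have hE1v1 : E₁ α₁ = (η k₁ : ℝ) / Qr := by rw [hE₁ α₁, hv1]
  have hE1v3 : E₁ α₃ = (η k₃ : ℝ) / Qr := by rw [hE₁ α₃, hv3]
  have hE2v : E₂ α₂ = ((η k₂ : ℝ) ^ 2 - Qr) / (Qr * (Qr - 1)) := by
    rw [hE₂ α₂, hv2]
    congr 1
    ring
  -- nonemptiness of the cell fibers
  obtain ⟨σ₀, hσ₀⟩ := hη
  have hmem0 : ∀ k : Fin d → ZMod m,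
      (fun a => σ₀ (cellPoint d m q k a)) ∈ cellFib (Fin d → Fin q) (η k) := by
    intro k
    rw [mem_cellFib]
    rw [fiber, Finset.mem_filter] at hσ₀
    exact congrFun hσ₀.2 k
  have hNne : ∀ k : Fin d → ZMod m, ((cellFib (Fin d → Fin q) (η k)).card : ℝ) ≠ 0 := by
    intro k
    exact_mod_cast (Finset.card_pos.mpr ⟨_, hmem0 k⟩).ne'
  -- single-cell moments
  have M1 : ∀ a : Fin d → Fin q, ∑ t ∈ cellFib (Fin d → Fin q) (η k₁), spin (t a)
      = ((cellFib (Fin d → Fin q) (η k₁)).card : ℝ) * E₁ α₁ := by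
    intro a
    have h := moment_one (A := Fin d → Fin q) (η k₁) a
    rw [hcardAR] at h
    rw [hE1v1]
    field_simp
    linarith [h]
  have M3 : ∀ c : Fin d → Fin q, ∑ t ∈ cellFib (Fin d → Fin q) (η k₃), spin (t c)
      = ((cellFib (Fin d → Fin q) (η k₃)).card : ℝ) * E₁ α₃ := by
    intro c
    have h := moment_one (A := Fin d → Fin q) (η k₃) c
    rw [hcardAR] at h
    rw [hE1v3]
    field_simp
    linarith [h]
  have M2 : ∀ b b' : Fin d → Fin q,
      ∑ t ∈ cellFib (Fin d → Fin q) (η k₂), spin (t b) * spin (t b')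
        = ((cellFib (Fin d → Fin q) (η k₂)).card : ℝ) * (if b = b' then 1 else E₂ α₂) := by
    intro b b'
    by_cases hb : b = b'
    · subst hb
      rw [if_pos rfl, mul_one, Finset.sum_congr rfl (fun t _ => spin_mul_self (t b))]
      simp
    · rw [if_neg hb, hE2v]
      have h := moment_two (A := Fin d → Fin q) (η k₂) hb
      rw [hcardAR] at h
      have hne : Qr * (Qr - 1) ≠ 0 := mul_ne_zero hQr0 hQr1
      field_simp
      linarith [h]
  -- the key factorization over the pi-finset
  have key : ∀ a b b' c : Fin d → Fin q,
      ∑ τ ∈ Fintype.piFinset (fun k : Fin d → ZMod m => cellFib (Fin d → Fin q) (η k)),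
        spin (τ k₁ a) * spin (τ k₂ b) * (spin (τ k₂ b') * spin (τ k₃ c))
      = (∑ t ∈ cellFib (Fin d → Fin q) (η k₁), spin (t a))
        * (∑ t ∈ cellFib (Fin d → Fin q) (η k₂), spin (t b) * spin (t b'))
        * ((∑ t ∈ cellFib (Fin d → Fin q) (η k₃), spin (t c))
          * ∏ k ∈ Finset.univ \ ({k₁, k₂, k₃} : Finset (Fin d → ZMod m)),
              ((cellFib (Fin d → Fin q) (η k)).card : ℝ)) := by
    intro a b b' c
    have hg : ∀ τ : (Fin d → ZMod m) → (Fin d → Fin q) → Bool,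
        spin (τ k₁ a) * spin (τ k₂ b) * (spin (τ k₂ b') * spin (τ k₃ c))
          = ∏ k : Fin d → ZMod m,
              ((if k = k₁ then spin (τ k a) else 1)
                * ((if k = k₂ then spin (τ k b) * spin (τ k b') else 1)
                  * (if k = k₃ then spin (τ k c) else 1))) := by
      intro τ
      rw [Finset.prod_mul_distrib, Finset.prod_mul_distrib,
        Finset.prod_ite_eq' Finset.univ k₁ (fun k => spin (τ k a)),
        Finset.prod_ite_eq' Finset.univ k₂ (fun k => spin (τ k b) * spin (τ k b')),
        Finset.prod_ite_eq' Finset.univ k₃ (fun k => spin (τ k c))]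
      simp only [Finset.mem_univ, if_true]
      ring
    have hps := Finset.prod_univ_sum
      (fun k : Fin d → ZMod m => cellFib (Fin d → Fin q) (η k))
      (fun (k : Fin d → ZMod m) (t : (Fin d → Fin q) → Bool) =>
        (if k = k₁ then spin (t a) else 1)
          * ((if k = k₂ then spin (t b) * spin (t b') else 1)
            * (if k = k₃ then spin (t c) else 1)))
    calc ∑ τ ∈ Fintype.piFinset (fun k : Fin d → ZMod m => cellFib (Fin d → Fin q) (η k)),
          spin (τ k₁ a) * spin (τ k₂ b) * (spin (τ k₂ b') * spin (τ k₃ c))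
        = ∑ τ ∈ Fintype.piFinset (fun k : Fin d → ZMod m => cellFib (Fin d → Fin q) (η k)),
            ∏ k : Fin d → ZMod m,
              ((if k = k₁ then spin (τ k a) else 1)
                * ((if k = k₂ then spin (τ k b) * spin (τ k b') else 1)
                  * (if k = k₃ then spin (τ k c) else 1))) :=
          Finset.sum_congr rfl fun τ _ => hg τ
      _ = ∏ k : Fin d → ZMod m, ∑ t ∈ cellFib (Fin d → Fin q) (η k),
            ((if k = k₁ then spin (t a) else 1)
              * ((if k = k₂ then spin (t b) * spin (t b') else 1)
                * (if k = k₃ then spin (t c) else 1))) := hps.symm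
      _ = (∑ t ∈ cellFib (Fin d → Fin q) (η k₁), spin (t a))
          * (∑ t ∈ cellFib (Fin d → Fin q) (η k₂), spin (t b) * spin (t b'))
          * ((∑ t ∈ cellFib (Fin d → Fin q) (η k₃), spin (t c))
            * ∏ k ∈ Finset.univ \ ({k₁, k₂, k₃} : Finset (Fin d → ZMod m)),
                ((cellFib (Fin d → Fin q) (η k)).card : ℝ)) := by
          rw [← Finset.prod_sdiff (Finset.subset_univ ({k₁, k₂, k₃} : Finset (Fin d → ZMod m)))]
          have e0 : ∏ k ∈ Finset.univ \ ({k₁, k₂, k₃} : Finset (Fin d → ZMod m)),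
              (∑ t ∈ cellFib (Fin d → Fin q) (η k),
                ((if k = k₁ then spin (t a) else 1)
                  * ((if k = k₂ then spin (t b) * spin (t b') else 1)
                    * (if k = k₃ then spin (t c) else 1))))
              = ∏ k ∈ Finset.univ \ ({k₁, k₂, k₃} : Finset (Fin d → ZMod m)),
                 ((cellFib (Fin d → Fin q) (η k)).card : ℝ) := by
            refine Finset.prod_congr rfl fun k hk => ?_
            simp only [Finset.mem_sdiff, Finset.mem_insert, Finset.mem_singleton] at hk
            push_neg at hk
            obtain ⟨-, hk1, hk2, hk3⟩ := hk
            rw [Finset.sum_congr rfl fun t _ => by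
              rw [if_neg hk1, if_neg hk2, if_neg hk3, one_mul, one_mul]]
            simp
          rw [e0]
          rw [Finset.prod_insert (by simp [h12, h13]),
            Finset.prod_insert (by simp [h23]), Finset.prod_singleton]
          have e1 : ∑ t ∈ cellFib (Fin d → Fin q) (η k₁),
              ((if k₁ = k₁ then spin (t a) else 1)
                * ((if k₁ = k₂ then spin (t b) * spin (t b') else 1)
                  * (if k₁ = k₃ then spin (t c) else 1)))
              = ∑ t ∈ cellFib (Fin d → Fin q) (η k₁), spin (t a) :=
            Finset.sum_congr rfl fun t _ => by
              rw [if_pos rfl, if_neg h12, if_neg h13]; ring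
          have e2 : ∑ t ∈ cellFib (Fin d → Fin q) (η k₂),
              ((if k₂ = k₁ then spin (t a) else 1)
                * ((if k₂ = k₂ then spin (t b) * spin (t b') else 1)
                  * (if k₂ = k₃ then spin (t c) else 1)))
              = ∑ t ∈ cellFib (Fin d → Fin q) (η k₂), spin (t b) * spin (t b') :=
            Finset.sum_congr rfl fun t _ => by
              rw [if_neg (Ne.symm h12), if_pos rfl, if_neg h23]; ring
          have e3 : ∑ t ∈ cellFib (Fin d → Fin q) (η k₃),
              ((if k₃ = k₁ then spin (t a) else 1)
                * ((if k₃ = k₂ then spin (t b) * spin (t b') else 1)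
                  * (if k₃ = k₃ then spin (t c) else 1)))
              = ∑ t ∈ cellFib (Fin d → Fin q) (η k₃), spin (t c) :=
            Finset.sum_congr rfl fun t _ => by
              rw [if_neg (Ne.symm h13), if_neg (Ne.symm h23), if_pos rfl]; ring
          rw [e1, e2, e3]
          ring
  -- rewrite the numerator via the reindexing
  have hprod : ∀ σ : (Fin d → ZMod (m * q)) → Bool, S₁ σ * S₂ σ
      = ∑ a : Fin d → Fin q, ∑ b : Fin d → Fin q, ∑ b' : Fin d → Fin q, ∑ c : Fin d → Fin q,
          aJ a b * bJ b' c *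
            (spin (σ (cellPoint d m q k₁ a)) * spin (σ (cellPoint d m q k₂ b)) *
              (spin (σ (cellPoint d m q k₂ b')) * spin (σ (cellPoint d m q k₃ c)))) := by
    intro σ
    rw [hS₁ σ, hS₂ σ, Finset.sum_mul_sum]
    refine Finset.sum_congr rfl fun a _ => ?_
    rw [Finset.sum_congr rfl fun b' (_ : b' ∈ Finset.univ) => Finset.sum_mul_sum _ _ _ _,
      Finset.sum_comm]
    exact Finset.sum_congr rfl fun b _ => Finset.sum_congr rfl fun b' _ =>
      Finset.sum_congr rfl fun c _ => by ring
  have hnum : ∑ σ ∈ fiber d m q η, S₁ σ * S₂ σ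
      = ∑ τ ∈ Fintype.piFinset (fun k : Fin d → ZMod m => cellFib (Fin d → Fin q) (η k)),
          ∑ a : Fin d → Fin q, ∑ b : Fin d → Fin q, ∑ b' : Fin d → Fin q, ∑ c : Fin d → Fin q,
            aJ a b * bJ b' c *
              (spin (τ k₁ a) * spin (τ k₂ b) * (spin (τ k₂ b') * spin (τ k₃ c))) := by
    rw [Finset.sum_congr rfl fun σ _ => hprod σ]
    exact fiber_sum_reindex d m q η
      (fun τ => ∑ a : Fin d → Fin q, ∑ b : Fin d → Fin q, ∑ b' : Fin d → Fin q,
        ∑ c : Fin d → Fin q, aJ a b * bJ b' c *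
          (spin (τ k₁ a) * spin (τ k₂ b) * (spin (τ k₂ b') * spin (τ k₃ c))))
  -- swap sums and insert the moments
  have hswap : ∑ τ ∈ Fintype.piFinset (fun k : Fin d → ZMod m => cellFib (Fin d → Fin q) (η k)),
      ∑ a : Fin d → Fin q, ∑ b : Fin d → Fin q, ∑ b' : Fin d → Fin q, ∑ c : Fin d → Fin q,
        aJ a b * bJ b' c * (spin (τ k₁ a) * spin (τ k₂ b) * (spin (τ k₂ b') * spin (τ k₃ c)))
      = ∑ a : Fin d → Fin q, ∑ b : Fin d → Fin q, ∑ b' : Fin d → Fin q, ∑ c : Fin d → Fin q,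
          aJ a b * bJ b' c *
            ((((cellFib (Fin d → Fin q) (η k₁)).card : ℝ) * E₁ α₁)
              * (((cellFib (Fin d → Fin q) (η k₂)).card : ℝ) * (if b = b' then 1 else E₂ α₂))
              * ((((cellFib (Fin d → Fin q) (η k₃)).card : ℝ) * E₁ α₃)
                * ∏ k ∈ Finset.univ \ ({k₁, k₂, k₃} : Finset (Fin d → ZMod m)),
                    ((cellFib (Fin d → Fin q) (η k)).card : ℝ))) := by
    rw [Finset.sum_comm]
    refine Finset.sum_congr rfl fun a _ => ?_
    rw [Finset.sum_comm]
    refine Finset.sum_congr rfl fun b _ => ?_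
    rw [Finset.sum_comm]
    refine Finset.sum_congr rfl fun b' _ => ?_
    rw [Finset.sum_comm]
    refine Finset.sum_congr rfl fun c _ => ?_
    rw [← Finset.mul_sum, key a b b' c, M1 a, M2 b b', M3 c]
  -- cardinality of the fiber
  have hcard : ((fiber d m q η).card : ℝ)
      = ∏ k : Fin d → ZMod m, ((cellFib (Fin d → Fin q) (η k)).card : ℝ) := by
    have h1 := fiber_sum_reindex d m q η (fun _ => (1 : ℝ))
    simp only [Finset.sum_const, nsmul_eq_mul, mul_one] at h1
    rw [h1]
    simp [Fintype.card_piFinset]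
  have hsplitN : ((fiber d m q η).card : ℝ)
      = (((cellFib (Fin d → Fin q) (η k₁)).card : ℝ)
          * (((cellFib (Fin d → Fin q) (η k₂)).card : ℝ)
            * ((cellFib (Fin d → Fin q) (η k₃)).card : ℝ)))
        * ∏ k ∈ Finset.univ \ ({k₁, k₂, k₃} : Finset (Fin d → ZMod m)),
            ((cellFib (Fin d → Fin q) (η k)).card : ℝ) := by
    rw [hcard, ← Finset.prod_sdiff (Finset.subset_univ ({k₁, k₂, k₃} : Finset (Fin d → ZMod m))),
      Finset.prod_insert (by simp [h12, h13]), Finset.prod_insert (by simp [h23]),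
      Finset.prod_singleton]
    ring
  -- vanishing of the centered sum
  have haJ0 : ∑ a : Fin d → Fin q, ∑ b : Fin d → Fin q, aJ a b = 0 := by
    simp only [haJ, Finset.sum_sub_distrib, Finset.sum_const, Finset.card_univ, hcardA,
      nsmul_eq_mul, hQrcast]
    field_simp
    ring
  -- the inner sum computation
  have hsum1 : ∑ a : Fin d → Fin q, ∑ b : Fin d → Fin q, ∑ b' : Fin d → Fin q,
      ∑ c : Fin d → Fin q, aJ a b * bJ b' c * E₂ α₂ = 0 := by
    have hc : ∀ a b b' : Fin d → Fin q, ∑ c : Fin d → Fin q, aJ a b * bJ b' c * E₂ α₂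
        = aJ a b * ((∑ c : Fin d → Fin q, bJ b' c) * E₂ α₂) := by
      intro a b b'
      rw [← Finset.sum_mul, ← Finset.mul_sum, mul_assoc]
    have hb' : ∀ a b : Fin d → Fin q,
        ∑ b' : Fin d → Fin q, aJ a b * ((∑ c : Fin d → Fin q, bJ b' c) * E₂ α₂)
        = aJ a b * ((∑ b' : Fin d → Fin q, ∑ c : Fin d → Fin q, bJ b' c) * E₂ α₂) := by
      intro a b
      rw [← Finset.mul_sum, ← Finset.sum_mul]
    rw [Finset.sum_congr rfl fun a (_ : a ∈ Finset.univ) => Finset.sum_congr rfl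
        fun b _ => Finset.sum_congr rfl fun b' _ => hc a b b',
      Finset.sum_congr rfl fun a (_ : a ∈ Finset.univ) => Finset.sum_congr rfl
        fun b _ => hb' a b,
      Finset.sum_congr rfl fun a (_ : a ∈ Finset.univ) =>
        (Finset.sum_mul Finset.univ (fun b => aJ a b) _).symm,
      ← Finset.sum_mul, haJ0, zero_mul]
  have hsum2 : ∑ a : Fin d → Fin q, ∑ b : Fin d → Fin q, ∑ b' : Fin d → Fin q,
      ∑ c : Fin d → Fin q, aJ a b * bJ b' c * (if b = b' then 1 - E₂ α₂ else 0)
      = j₂ * (1 - E₂ α₂) := by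
    have h1 : ∀ a b : Fin d → Fin q,
        ∑ b' : Fin d → Fin q, ∑ c : Fin d → Fin q,
          aJ a b * bJ b' c * (if b = b' then 1 - E₂ α₂ else 0)
        = ∑ c : Fin d → Fin q, aJ a b * bJ b c * (1 - E₂ α₂) := by
      intro a b
      rw [Finset.sum_comm]
      refine Finset.sum_congr rfl fun c _ => ?_
      rw [Finset.sum_congr rfl (fun b' _ =>
        show aJ a b * bJ b' c * (if b = b' then 1 - E₂ α₂ else 0)
          = if b = b' then aJ a b * bJ b' c * (1 - E₂ α₂) else 0 from by split <;> ring)]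
      rw [Finset.sum_ite_eq]
      simp
    rw [Finset.sum_congr rfl fun a _ => Finset.sum_congr rfl fun b _ => h1 a b, hj₂]
    simp only [Finset.sum_mul]
  have hT : ∑ a : Fin d → Fin q, ∑ b : Fin d → Fin q, ∑ b' : Fin d → Fin q,
      ∑ c : Fin d → Fin q, aJ a b * bJ b' c * (if b = b' then 1 else E₂ α₂)
      = j₂ * (1 - E₂ α₂) := by
    have hw : ∀ b b' : Fin d → Fin q, (if b = b' then (1 : ℝ) else E₂ α₂)
        = E₂ α₂ + (if b = b' then 1 - E₂ α₂ else 0) := by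
      intro b b'; split <;> ring
    calc ∑ a : Fin d → Fin q, ∑ b : Fin d → Fin q, ∑ b' : Fin d → Fin q,
        ∑ c : Fin d → Fin q, aJ a b * bJ b' c * (if b = b' then 1 else E₂ α₂)
        = (∑ a : Fin d → Fin q, ∑ b : Fin d → Fin q, ∑ b' : Fin d → Fin q,
            ∑ c : Fin d → Fin q, aJ a b * bJ b' c * E₂ α₂)
          + ∑ a : Fin d → Fin q, ∑ b : Fin d → Fin q, ∑ b' : Fin d → Fin q,
            ∑ c : Fin d → Fin q, aJ a b * bJ b' c * (if b = b' then 1 - E₂ α₂ else 0) := by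
          simp only [hw, mul_add, Finset.sum_add_distrib]
      _ = j₂ * (1 - E₂ α₂) := by rw [hsum1, hsum2, zero_add]
  -- put everything together
  have hD : (((cellFib (Fin d → Fin q) (η k₁)).card : ℝ)
      * (((cellFib (Fin d → Fin q) (η k₂)).card : ℝ)
        * ((cellFib (Fin d → Fin q) (η k₃)).card : ℝ)))
      * (∏ k ∈ Finset.univ \ ({k₁, k₂, k₃} : Finset (Fin d → ZMod m)),
          ((cellFib (Fin d → Fin q) (η k)).card : ℝ)) ≠ 0 := by
    refine mul_ne_zero (mul_ne_zero (hNne k₁) (mul_ne_zero (hNne k₂) (hNne k₃))) ?_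
    rw [Finset.prod_ne_zero_iff]
    exact fun k _ => hNne k
  have hfactor : ∑ a : Fin d → Fin q, ∑ b : Fin d → Fin q, ∑ b' : Fin d → Fin q,
      ∑ c : Fin d → Fin q, aJ a b * bJ b' c *
        ((((cellFib (Fin d → Fin q) (η k₁)).card : ℝ) * E₁ α₁)
          * (((cellFib (Fin d → Fin q) (η k₂)).card : ℝ) * (if b = b' then 1 else E₂ α₂))
          * ((((cellFib (Fin d → Fin q) (η k₃)).card : ℝ) * E₁ α₃)
            * ∏ k ∈ Finset.univ \ ({k₁, k₂, k₃} : Finset (Fin d → ZMod m)),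
                ((cellFib (Fin d → Fin q) (η k)).card : ℝ)))
      = ((((cellFib (Fin d → Fin q) (η k₁)).card : ℝ)
          * (((cellFib (Fin d → Fin q) (η k₂)).card : ℝ)
            * ((cellFib (Fin d → Fin q) (η k₃)).card : ℝ)))
        * ∏ k ∈ Finset.univ \ ({k₁, k₂, k₃} : Finset (Fin d → ZMod m)),
            ((cellFib (Fin d → Fin q) (η k)).card : ℝ))
        * (E₁ α₁ * E₁ α₃ *
            ∑ a : Fin d → Fin q, ∑ b : Fin d → Fin q, ∑ b' : Fin d → Fin q,
              ∑ c : Fin d → Fin q, aJ a b * bJ b' c * (if b = b' then 1 else E₂ α₂)) := by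
    simp only [Finset.mul_sum]
    exact Finset.sum_congr rfl fun a _ => Finset.sum_congr rfl fun b _ =>
      Finset.sum_congr rfl fun b' _ => Finset.sum_congr rfl fun c _ => by ring
  rw [hnum, hswap, hfactor, hT, hsplitN, mul_comm _ (E₁ α₁ * E₁ α₃ * (j₂ * (1 - E₂ α₂))),
    mul_div_assoc, div_self hD, mul_one]
  ring
end
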